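/- (Theorem 1, convergence part) Consider the Cartesian-Block ADMM for sparse convex clustering: fix an n×T real matrix X, an m×n real matrix D, ρ > 0, λ, γ ≥ 0, fusion weights w_l ≥ 0 (1 ≤ l ≤ m) and sparsity weights ω_j ≥ 0 (1 ≤ j ≤ T). Given iterates (U^k, V₁^k, V₂^k, Z₁^k, Z₂^k) with V₁^k, Z₁^k of size m×T and U^k, V₂^k, Z₂^k of size n×T, define U^{k+1} = [(1+ρ)I + ρDᵀD]⁻¹[X + ρDᵀ(V₁^k − Z₁^k) + ρ(V₂^k − Z₂^k)]; V₁^{k+1} is the row-wise block soft-threshold of DU^{k+1} + Z₁^k with thresholds λw_l/ρ, i.e., its l-th row is (1 − (λw_l/ρ)/‖(DU^{k+1} + Z₁^k)_{l·}‖₂)₊ · (DU^{k+1} + Z₁^k)_{l·}; V₂^{k+1} is the column-wise block soft-threshold of U^{k+1} + Z₂^k with thresholds γω_j/ρ, i.e., its j-th column is (1 − (γω_j/ρ)/‖(U^{k+1} + Z₂^k)_{·j}‖₂)₊ · (U^{k+1} + Z₂^k)_{·j}; Z₁^{k+1} = Z₁^k + DU^{k+1} − V₁^{k+1}; Z₂^{k+1}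 = Z₂^k + U^{k+1} − V₂^{k+1}. Then for any initialization, the primal iterates U^k converge (in Frobenius norm) to the unique minimizer Û of the sparse convex clustering objective f(U) = (1/2)‖U − X‖_F² + λ Σ_{l=1}^m w_l ‖(DU)_{l·}‖₂ + γ Σ_{j=1}^T ω_j ‖U_{·j}‖₂, the copy iterates converge (V₁^k → DÛ and V₂^k → Û), and the primal residuals converge to zero: DU^k − V₁^k → 0 and U^k − V₂^k → 0. -/

import Mathlib

set_option maxHeartbeats 1600000


open Matrix Filter
open scoped BigOperators

/-- Frobenius norm squared of a real matrix. -/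
noncomputable def frobSq {α β : Type*} [Fintype α] [Fintype β] (A : Matrix α β ℝ) : ℝ :=
  ∑ i, ∑ j, (A i j) ^ 2

/-- Frobenius norm of a real matrix. -/
noncomputable def frobNorm {α β : Type*} [Fintype α] [Fintype β] (A : Matrix α β ℝ) : ℝ :=
  Real.sqrt (frobSq A)

/-- Euclidean norm of a real vector. -/
noncomputable def vecNorm {α : Type*} [Fintype α] (v : α → ℝ) : ℝ :=
  Real.sqrt (∑ i, (v i) ^ 2)

/-- Euclidean norm of the `j`-th column of a matrix. -/
noncomputable def colNorm {α β : Type*} [Fintype α] [Fintype β]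
    (A : Matrix α β ℝ) (j : β) : ℝ :=
  Real.sqrt (∑ i, (A i j) ^ 2)

/-- The sparse convex clustering objective
`f(U) = (1/2)‖U − X‖_F² + λ Σ_l w_l ‖(DU)_{l·}‖₂ + γ Σ_j ω_j ‖U_{·j}‖₂`. -/
noncomputable def sccObj {m n T : ℕ} (X : Matrix (Fin n) (Fin T) ℝ)
    (D : Matrix (Fin m) (Fin n) ℝ) (lam gam : ℝ) (w : Fin m → ℝ) (ω : Fin T → ℝ)
    (U : Matrix (Fin n) (Fin T) ℝ) : ℝ :=
  (1 / 2) * frobSq (U - X) + lam * ∑ l, w l * vecNorm ((D * U) l)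
    + gam * ∑ j, ω j * colNorm U j

noncomputable def ipv {α : Type*} [Fintype α] (u v : α → ℝ) : ℝ := ∑ i, u i * v i
noncomputable def ipm {α β : Type*} [Fintype α] [Fintype β] (A B : Matrix α β ℝ) : ℝ :=
  ∑ i, ipv (A i) (B i)

section VecLemmas
variable {α β : Type*} [Fintype α] [Fintype β]

lemma vecNorm_nonneg (v : α → ℝ) : 0 ≤ vecNorm v := Real.sqrt_nonneg _

lemma sq_vecNorm (v : α → ℝ) : vecNorm v ^ 2 = ∑ i, (v i)^2 :=
  Real.sq_sqrt (Finset.sum_nonneg fun i _ => sq_nonneg _)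

lemma ipv_self (v : α → ℝ) : ipv v v = vecNorm v ^ 2 := by
  rw [sq_vecNorm]; simp [ipv, sq]

lemma vecNorm_eq_zero_iff (v : α → ℝ) : vecNorm v = 0 ↔ v = 0 := by
  constructor
  · intro h
    have h2 : ∑ i, (v i)^2 = 0 := by
      have := congrArg (fun x => x ^ 2) h
      simpa [sq_vecNorm] using this
    funext i
    have := (Finset.sum_eq_zero_iff_of_nonneg (fun i _ => sq_nonneg (v i))).1 h2 i (Finset.mem_univ i)
    simpa using pow_eq_zero_iff (n := 2) (by norm_num) |>.1 this
  · intro h; simp [vecNorm, h]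

lemma vecNorm_smul (c : ℝ) (v : α → ℝ) : vecNorm (fun i => c * v i) = |c| * vecNorm v := by
  simp only [vecNorm, mul_pow]
  rw [← Finset.mul_sum, Real.sqrt_mul (sq_nonneg c), Real.sqrt_sq_eq_abs]

lemma abs_ipv_le (u v : α → ℝ) : |ipv u v| ≤ vecNorm u * vecNorm v := by
  have h := Finset.sum_mul_sq_le_sq_mul_sq Finset.univ u v
  have : |ipv u v| = Real.sqrt ((ipv u v)^2) := (Real.sqrt_sq_eq_abs _).symm
  rw [this]
  have h2 : (ipv u v)^2 ≤ (vecNorm u * vecNorm v)^2 := by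
    rw [mul_pow, sq_vecNorm, sq_vecNorm]; exact h
  calc Real.sqrt ((ipv u v)^2) ≤ Real.sqrt ((vecNorm u * vecNorm v)^2) := Real.sqrt_le_sqrt h2
    _ = |vecNorm u * vecNorm v| := Real.sqrt_sq_eq_abs _
    _ = vecNorm u * vecNorm v := abs_of_nonneg (mul_nonneg (vecNorm_nonneg _) (vecNorm_nonneg _))

lemma ipv_le (u v : α → ℝ) : ipv u v ≤ vecNorm u * vecNorm v :=
  le_trans (le_abs_self _) (abs_ipv_le u v)

/-- `p` is a subgradient of `τ‖·‖₂` at `v`. -/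
def SubG {α : Type*} [Fintype α] (τ : ℝ) (v p : α → ℝ) : Prop :=
  vecNorm p ≤ τ ∧ ipv p v = τ * vecNorm v

lemma SubG.mono {τ : ℝ} {v p v' p' : α → ℝ} (h : SubG τ v p) (h' : SubG τ v' p') :
    0 ≤ ipv (fun i => p i - p' i) (fun i => v i - v' i) := by
  have e : ipv (fun i => p i - p' i) (fun i => v i - v' i)
      = ipv p v - ipv p v' - ipv p' v + ipv p' v' := by
    simp only [ipv]; rw [← Finset.sum_sub_distrib, ← Finset.sum_sub_distrib,
      ← Finset.sum_add_distrib]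
    apply Finset.sum_congr rfl; intro i _; ring
  have hpv' : ipv p v' ≤ τ * vecNorm v' :=
    le_trans (ipv_le p v') (mul_le_mul_of_nonneg_right h.1 (vecNorm_nonneg _))
  have hp'v : ipv p' v ≤ τ * vecNorm v :=
    le_trans (ipv_le p' v) (mul_le_mul_of_nonneg_right h'.1 (vecNorm_nonneg _))
  rw [e, h.2, h'.2]; linarith

/-- The block soft-threshold output together with its residual gives a subgradient. -/
lemma softthresh_subG (τ ρ : ℝ) (hτ : 0 ≤ τ) (hρ : 0 < ρ) (s v : α → ℝ)
    (hv : ∀ j, v j = max (1 - (τ/ρ)/vecNorm s) 0 * s j) :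
    SubG τ v (fun j => ρ * (s j - v j)) := by
  by_cases hs : vecNorm s = 0
  · have hs0 : s = 0 := (vecNorm_eq_zero_iff s).1 hs
    have hv0 : v = 0 := by funext j; simp [hv j, hs0]
    constructor
    · have : (fun j => ρ * (s j - v j)) = (0 : α → ℝ) := by funext j; simp [hs0, hv0]
      rw [this, show vecNorm (0 : α → ℝ) = 0 from (vecNorm_eq_zero_iff (0:α→ℝ)).2 rfl]
      exact hτ
    · simp only [ipv, hv0, hs]
      simp [(vecNorm_eq_zero_iff (0:α→ℝ)).2 rfl]
  · have hsp : 0 < vecNorm s := lt_of_le_of_ne (vecNorm_nonneg s) (Ne.symm hs)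
    by_cases hbig : 1 - (τ/ρ)/vecNorm s ≤ 0
    · -- v = 0, p = ρ s, ‖ρ s‖ = ρ‖s‖ ≤ τ
      have hv0 : v = 0 := by funext j; simp [hv j, max_eq_right hbig]
      have hsmall : ρ * vecNorm s ≤ τ := by
        have : (τ/ρ)/vecNorm s ≥ 1 := by linarith
        have := (le_div_iff₀ hsp).1 this
        calc ρ * vecNorm s ≤ ρ * (τ/ρ) := by nlinarith
          _ = τ := by field_simp
      constructor
      · have : (fun j => ρ * (s j - v j)) = fun j => ρ * s j := by funext j; simp [hv0]
        rw [this, vecNorm_smul, abs_of_pos hρ]; exact hsmall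
      · simp only [ipv, hv0]
        simp [(vecNorm_eq_zero_iff (0:α→ℝ)).2 rfl]
    · push_neg at hbig
      set c : ℝ := 1 - (τ/ρ)/vecNorm s with hc
      have hmax : max c 0 = c := max_eq_left (le_of_lt hbig)
      have hcle : c ≤ 1 := by
        have : 0 ≤ (τ/ρ)/vecNorm s := div_nonneg (div_nonneg hτ hρ.le) hsp.le
        simp [hc]; linarith
      have hveq : v = fun j => c * s j := by funext j; rw [hv j, hmax]
      have hvnorm : vecNorm v = c * vecNorm s := by
        rw [hveq, vecNorm_smul, abs_of_pos hbig]
      have hpz : (fun j => ρ * (s j - v j)) = fun j => (τ / vecNorm s) * s j := by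
        funext j; rw [hveq]
        have : ρ * (s j - c * s j) = ρ * (1 - c) * s j := by ring
        rw [this, hc]
        have : ρ * (1 - (1 - (τ/ρ)/vecNorm s)) = τ / vecNorm s := by
          field_simp
          ring
        rw [this]
      constructor
      · rw [hpz, vecNorm_smul, abs_of_nonneg (div_nonneg hτ hsp.le), div_mul_cancel₀]
        exact hs
      · rw [hpz, hvnorm]
        have : ipv (fun j => τ / vecNorm s * s j) v = (τ / vecNorm s) * c * ipv s s := by
          rw [hveq]; simp only [ipv, Finset.mul_sum]
          apply Finset.sum_congr rfl; intro i _; ring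
        rw [this, ipv_self, sq]
        field_simp
end VecLemmas

section IPM
variable {α β γ : Type*} [Fintype α] [Fintype β] [Fintype γ]

lemma ipm_def (A B : Matrix α β ℝ) : ipm A B = ∑ i, ∑ j, A i j * B i j := rfl

lemma frobSq_eq_ipm (A : Matrix α β ℝ) : frobSq A = ipm A A := by
  simp [frobSq, ipm_def, sq]

lemma frobSq_nonneg (A : Matrix α β ℝ) : 0 ≤ frobSq A :=
  Finset.sum_nonneg fun i _ => Finset.sum_nonneg fun j _ => sq_nonneg _

lemma ipm_comm (A B : Matrix α β ℝ) : ipm A B = ipm B A := by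
  simp only [ipm_def]; congr 1; funext i; congr 1; funext j; ring

lemma ipm_sub_left (A B C : Matrix α β ℝ) : ipm (A - B) C = ipm A C - ipm B C := by
  simp only [ipm_def, Matrix.sub_apply, ← Finset.sum_sub_distrib]
  congr 1; funext i; congr 1; funext j; ring

lemma ipm_sub_right (A B C : Matrix α β ℝ) : ipm A (B - C) = ipm A B - ipm A C := by
  rw [ipm_comm, ipm_sub_left, ipm_comm B A, ipm_comm C A]

lemma ipm_add_left (A B C : Matrix α β ℝ) : ipm (A + B) C = ipm A C + ipm B C := by
  simp only [ipm_def, Matrix.add_apply, ← Finset.sum_add_distrib]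
  congr 1; funext i; congr 1; funext j; ring

lemma ipm_add_right (A B C : Matrix α β ℝ) : ipm A (B + C) = ipm A B + ipm A C := by
  rw [ipm_comm, ipm_add_left, ipm_comm B A, ipm_comm C A]

lemma ipm_smul_left (c : ℝ) (A B : Matrix α β ℝ) : ipm (c • A) B = c * ipm A B := by
  simp only [ipm_def, Matrix.smul_apply, smul_eq_mul, Finset.mul_sum]
  congr 1; funext i; congr 1; funext j; ring

lemma frobSq_sub (A B : Matrix α β ℝ) :
    frobSq (A - B) = frobSq A - 2 * ipm A B + frobSq B := by
  simp only [frobSq_eq_ipm, ipm_sub_left, ipm_sub_right, ipm_comm B A]; ring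

lemma frobSq_add (A B : Matrix α β ℝ) :
    frobSq (A + B) = frobSq A + 2 * ipm A B + frobSq B := by
  simp only [frobSq_eq_ipm, ipm_add_left, ipm_add_right, ipm_comm B A]; ring

lemma ipm_mulT (D : Matrix α β ℝ) (A : Matrix β γ ℝ) (B : Matrix α γ ℝ) :
    ipm (D * A) B = ipm A (Dᵀ * B) := by
  simp only [ipm_def, Matrix.mul_apply, Matrix.transpose_apply, Finset.sum_mul, Finset.mul_sum]
  calc (∑ i : α, ∑ k : γ, ∑ j : β, D i j * A j k * B i k)
      = ∑ i : α, ∑ j : β, ∑ k : γ, D i j * A j k * B i k :=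
        Finset.sum_congr rfl fun i _ => Finset.sum_comm
    _ = ∑ j : β, ∑ i : α, ∑ k : γ, D i j * A j k * B i k := Finset.sum_comm
    _ = ∑ j : β, ∑ k : γ, ∑ i : α, D i j * A j k * B i k :=
        Finset.sum_congr rfl fun j _ => Finset.sum_comm
    _ = ∑ j : β, ∑ k : γ, ∑ i : α, A j k * (D i j * B i k) :=
        Finset.sum_congr rfl fun j _ => Finset.sum_congr rfl fun k _ =>
          Finset.sum_congr rfl fun i _ => by ring

lemma frobSq_eq_zero_iff (A : Matrix α β ℝ) : frobSq A = 0 ↔ A = 0 := by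
  constructor
  · intro h
    funext i j
    have h1 : ∀ i ∈ Finset.univ, (0:ℝ) ≤ ∑ j, (A i j)^2 :=
      fun i _ => Finset.sum_nonneg fun j _ => sq_nonneg _
    have h2 := (Finset.sum_eq_zero_iff_of_nonneg h1).1 h i (Finset.mem_univ i)
    have h3 := (Finset.sum_eq_zero_iff_of_nonneg (fun j _ => sq_nonneg (A i j))).1 h2 j
      (Finset.mem_univ j)
    simpa using pow_eq_zero_iff (n := 2) (by norm_num) |>.1 h3
  · intro h; simp [h, frobSq]

end IPM
section Util
variable {α β : Type*} [Fintype α] [Fintype β]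

lemma colNorm_eq (A : Matrix α β ℝ) (j : β) : colNorm A j = vecNorm (fun i => A i j) := rfl

lemma ipm_smul_right (c : ℝ) (A B : Matrix α β ℝ) : ipm A (c • B) = c * ipm A B := by
  rw [ipm_comm, ipm_smul_left, ipm_comm]

lemma frobSq_smul (c : ℝ) (A : Matrix α β ℝ) : frobSq (c • A) = c^2 * frobSq A := by
  rw [frobSq_eq_ipm, ipm_smul_left, ipm_smul_right, frobSq_eq_ipm]; ring

lemma vecNorm_add_le (u v : α → ℝ) :
    vecNorm (fun i => u i + v i) ≤ vecNorm u + vecNorm v := by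
  have h1 : vecNorm (fun i => u i + v i) ^ 2 = vecNorm u ^2 + 2 * ipv u v + vecNorm v ^2 := by
    rw [sq_vecNorm, sq_vecNorm, sq_vecNorm]
    simp only [ipv, Finset.mul_sum, ← Finset.sum_add_distrib]
    exact Finset.sum_congr rfl fun i _ => by ring
  have h2 : vecNorm (fun i => u i + v i) ^ 2 ≤ (vecNorm u + vecNorm v)^2 := by
    have := ipv_le u v; rw [h1]; nlinarith
  have h3 : 0 ≤ vecNorm u + vecNorm v := add_nonneg (vecNorm_nonneg _) (vecNorm_nonneg _)
  nlinarith [vecNorm_nonneg (fun i => u i + v i)]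

lemma continuous_vecNorm : Continuous (vecNorm : (α → ℝ) → ℝ) := by
  apply Real.continuous_sqrt.comp
  exact continuous_finset_sum _ fun i _ => (continuous_apply i).pow 2

lemma continuous_ipv_left (u : α → ℝ) : Continuous (fun v : α → ℝ => ipv v u) :=
  continuous_finset_sum _ fun i _ => ((continuous_apply i).mul continuous_const)

lemma continuous_frobSq : Continuous (frobSq : Matrix α β ℝ → ℝ) := by
  apply continuous_finset_sum _ fun i _ => continuous_finset_sum _ fun j _ => ?_
  exact ((continuous_id.matrix_elem i j).pow 2)

end Util
section DirSubg
variable {α : Type*} [Fintype α]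

/-- sqrt(a + e) ≤ sqrt a + e / (2 sqrt a) when a > 0 and a + e ≥ 0. -/
lemma sqrt_add_le (a e : ℝ) (ha : 0 < a) (hae : 0 ≤ a + e) :
    Real.sqrt (a + e) ≤ Real.sqrt a + e / (2 * Real.sqrt a) := by
  have hsa : 0 < Real.sqrt a := Real.sqrt_pos.2 ha
  have hsq : Real.sqrt a ^ 2 = a := Real.sq_sqrt ha.le
  have hrhs : 0 ≤ Real.sqrt a + e / (2 * Real.sqrt a) := by
    have h1 : Real.sqrt a + e/(2*Real.sqrt a) = (2*a + e)/(2*Real.sqrt a) := by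
      field_simp; nlinarith
    rw [h1]
    exact div_nonneg (by linarith) (by positivity)
  rw [Real.sqrt_le_left hrhs]
  have h2 : (Real.sqrt a + e / (2 * Real.sqrt a))^2
      = a + e + (e / (2 * Real.sqrt a))^2 := by
    field_simp
    nlinarith
  nlinarith [sq_nonneg (e / (2 * Real.sqrt a))]

lemma exists_dir_subg (τ : ℝ) (hτ : 0 ≤ τ) (v u : α → ℝ) :
    ∃ (q : α → ℝ) (R : ℝ), SubG τ v q ∧ 0 ≤ R ∧ ∀ t : ℝ, 0 < t →
      τ * vecNorm (fun i => v i + t * u i) ≤ τ * vecNorm v + t * ipv q u + t^2 * R := by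
  by_cases hv : vecNorm v = 0
  · -- v = 0
    have hv0 : v = 0 := (vecNorm_eq_zero_iff v).1 hv
    by_cases hu : vecNorm u = 0
    · refine ⟨0, 0, ⟨?_, ?_⟩, le_refl 0, ?_⟩
      · simpa [(vecNorm_eq_zero_iff (0:α→ℝ)).2 rfl] using hτ
      · simp [ipv, hv]
      · intro t ht
        have : (fun i => v i + t * u i) = fun i => t * u i := by
          funext i; simp [hv0]
        rw [this, vecNorm_smul, hu]
        simp [hv, ipv]
    · have hup : 0 < vecNorm u := lt_of_le_of_ne (vecNorm_nonneg u) (Ne.symm hu)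
      refine ⟨fun i => (τ / vecNorm u) * u i, 0, ⟨?_, ?_⟩, le_refl 0, ?_⟩
      · rw [vecNorm_smul, abs_of_nonneg (div_nonneg hτ hup.le), div_mul_cancel₀ _ hu]
      · have h0 : vecNorm (0:α→ℝ) = 0 := (vecNorm_eq_zero_iff _).2 rfl
        rw [hv0, h0]; simp [ipv]
      · intro t ht
        have h1 : (fun i => v i + t * u i) = fun i => t * u i := by
          funext i; simp [hv0]
        rw [h1, vecNorm_smul, abs_of_pos ht, hv]
        have h2 : ipv (fun i => τ / vecNorm u * u i) u = (τ / vecNorm u) * ipv u u := by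
          simp only [ipv, Finset.mul_sum]
          exact Finset.sum_congr rfl fun i _ => by ring
        rw [h2, ipv_self]
        have : τ / vecNorm u * vecNorm u ^ 2 = τ * vecNorm u := by
          field_simp
        rw [this]
        nlinarith [vecNorm_nonneg u]
  · have hvp : 0 < vecNorm v := lt_of_le_of_ne (vecNorm_nonneg v) (Ne.symm hv)
    refine ⟨fun i => (τ / vecNorm v) * v i, τ * vecNorm u ^ 2 / (2 * vecNorm v),
      ⟨?_, ?_⟩, by positivity, ?_⟩
    · rw [vecNorm_smul, abs_of_nonneg (div_nonneg hτ hvp.le), div_mul_cancel₀ _ hv]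
    · have h2 : ipv (fun i => τ / vecNorm v * v i) v = (τ / vecNorm v) * ipv v v := by
        simp only [ipv, Finset.mul_sum]
        exact Finset.sum_congr rfl fun i _ => by ring
      rw [h2, ipv_self]; field_simp
    · intro t ht
      -- ‖v + t u‖ ≤ ‖v‖ + t ⟨v,u⟩/‖v‖ + t² ‖u‖²/(2‖v‖)
      have hexp : vecNorm (fun i => v i + t * u i)
          = Real.sqrt (vecNorm v ^ 2 + (2 * t * ipv v u + t^2 * vecNorm u ^2)) := by
        rw [vecNorm, sq_vecNorm, sq_vecNorm]
        congr 1
        simp only [ipv, Finset.mul_sum, ← Finset.sum_add_distrib]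
        exact Finset.sum_congr rfl fun i _ => by ring
      have hae : 0 ≤ vecNorm v ^2 + (2 * t * ipv v u + t^2 * vecNorm u ^2) := by
        have : vecNorm v ^2 + (2*t*ipv v u + t^2 * vecNorm u^2)
            = vecNorm (fun i => v i + t * u i)^2 := by
          rw [sq_vecNorm, sq_vecNorm, sq_vecNorm]
          simp only [ipv, Finset.mul_sum, ← Finset.sum_add_distrib]
          exact Finset.sum_congr rfl fun i _ => by ring
        rw [this]; positivity
      have hb := sqrt_add_le (vecNorm v ^2) (2 * t * ipv v u + t^2 * vecNorm u ^2)
        (by positivity) hae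
      have hsv : Real.sqrt (vecNorm v ^ 2) = vecNorm v := by
        rw [Real.sqrt_sq (vecNorm_nonneg v)]
      rw [hsv] at hb
      have h2 : ipv (fun i => τ / vecNorm v * v i) u = (τ / vecNorm v) * ipv v u := by
        simp only [ipv, Finset.mul_sum]; exact Finset.sum_congr rfl fun i _ => by ring
      rw [h2]
      have key : τ * (vecNorm v + (2 * t * ipv v u + t ^ 2 * vecNorm u ^ 2) / (2 * vecNorm v))
          = τ * vecNorm v + t * (τ / vecNorm v * ipv v u)
            + t^2 * (τ * vecNorm u ^2 / (2 * vecNorm v)) := by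
        field_simp; ring
      calc τ * vecNorm (fun i => v i + t * u i)
          ≤ τ * (vecNorm v + (2 * t * ipv v u + t ^ 2 * vecNorm u ^ 2) / (2 * vecNorm v)) := by
            rw [hexp]; exact mul_le_mul_of_nonneg_left hb hτ
        _ = _ := key

end DirSubg
section Cpt
variable {α β : Type*} [Fintype α] [Fintype β]

lemma abs_le_vecNorm (p : α → ℝ) (i : α) : |p i| ≤ vecNorm p := by
  rw [← Real.sqrt_sq_eq_abs]
  apply Real.sqrt_le_sqrt
  exact Finset.single_le_sum (f := fun i => (p i)^2) (fun i _ => sq_nonneg _) (Finset.mem_univ i)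

lemma isClosed_subG (τ : ℝ) (v : α → ℝ) : IsClosed {p : α → ℝ | SubG τ v p} := by
  have h1 : IsClosed {p : α → ℝ | vecNorm p ≤ τ} :=
    isClosed_le continuous_vecNorm continuous_const
  have h2 : IsClosed {p : α → ℝ | ipv p v = τ * vecNorm v} :=
    isClosed_eq (continuous_ipv_left v) continuous_const
  exact h1.inter h2

lemma isCompact_subG (τ : ℝ) (v : α → ℝ) : IsCompact {p : α → ℝ | SubG τ v p} := by
  apply IsCompact.of_isClosed_subset (isCompact_closedBall (0 : α → ℝ) τ)
    (isClosed_subG τ v)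
  intro p hp
  rw [Metric.mem_closedBall, dist_zero_right]
  rcases isEmpty_or_nonempty α with h | h
  · have hp0 : p = 0 := funext fun i => (h.false i).elim
    rw [hp0, norm_zero]
    exact le_trans (vecNorm_nonneg p) hp.1
  · rw [pi_norm_le_iff_of_nonneg (le_trans (vecNorm_nonneg p) hp.1)]
    intro i
    exact le_trans (abs_le_vecNorm p i) hp.1

lemma exists_subg (τ : ℝ) (hτ : 0 ≤ τ) (v : α → ℝ) : ∃ q, SubG τ v q := by
  obtain ⟨q, R, hq, -, -⟩ := exists_dir_subg τ hτ v 0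
  exact ⟨q, hq⟩

lemma SubG.combo {τ a b : ℝ} {v p q : α → ℝ} (hp : SubG τ v p) (hq : SubG τ v q)
    (ha : 0 ≤ a) (hb : 0 ≤ b) (hab : a + b = 1) :
    SubG τ v (fun i => a * p i + b * q i) := by
  have hτ : 0 ≤ τ := le_trans (vecNorm_nonneg p) hp.1
  constructor
  · calc vecNorm (fun i => a * p i + b * q i)
        ≤ vecNorm (fun i => a * p i) + vecNorm (fun i => b * q i) := vecNorm_add_le _ _
      _ = a * vecNorm p + b * vecNorm q := by
          rw [vecNorm_smul, vecNorm_smul, abs_of_nonneg ha, abs_of_nonneg hb]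
      _ ≤ a * τ + b * τ :=
          add_le_add (mul_le_mul_of_nonneg_left hp.1 ha) (mul_le_mul_of_nonneg_left hq.1 hb)
      _ = τ := by rw [← add_mul, hab, one_mul]
  · have : ipv (fun i => a * p i + b * q i) v = a * ipv p v + b * ipv q v := by
      simp only [ipv, Finset.mul_sum, ← Finset.sum_add_distrib]
      exact Finset.sum_congr rfl fun i _ => by ring
    rw [this, hp.2, hq.2, ← add_mul, hab, one_mul]

end Cpt
section KKT

lemma kkt_exists {m n T : ℕ} (X : Matrix (Fin n) (Fin T) ℝ) (D : Matrix (Fin m) (Fin n) ℝ)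
    (lam gam : ℝ) (hlam : 0 ≤ lam) (hgam : 0 ≤ gam)
    (w : Fin m → ℝ) (hw : ∀ l, 0 ≤ w l) (ω : Fin T → ℝ) (hω : ∀ j, 0 ≤ ω j)
    (Uhat : Matrix (Fin n) (Fin T) ℝ)
    (hUhat : ∀ W, sccObj X D lam gam w ω Uhat ≤ sccObj X D lam gam w ω W) :
    ∃ (P₁ : Matrix (Fin m) (Fin T) ℝ) (P₂ : Matrix (Fin n) (Fin T) ℝ),
      (∀ l, SubG (lam * w l) ((D * Uhat) l) (P₁ l)) ∧
      (∀ j, SubG (gam * ω j) (fun i => Uhat i j) (fun i => P₂ i j)) ∧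
      Uhat - X + Dᵀ * P₁ + P₂ = 0 := by
  classical
  set E : Matrix (Fin n) (Fin T) ℝ := Uhat - X with hE
  set K : Set (Matrix (Fin m) (Fin T) ℝ × Matrix (Fin n) (Fin T) ℝ) :=
    {p | (∀ l, SubG (lam * w l) ((D * Uhat) l) (p.1 l)) ∧
         (∀ j, SubG (gam * ω j) (fun i => Uhat i j) (fun i => p.2 i j))} with hK
  -- compactness of K
  have hKcpt : IsCompact K := by
    have h1 : IsCompact (Set.pi Set.univ
        (fun l : Fin m => {p : Fin T → ℝ | SubG (lam * w l) ((D * Uhat) l) p})) :=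
      isCompact_univ_pi fun l => isCompact_subG _ _
    have h2 : IsCompact ((fun M : Matrix (Fin T) (Fin n) ℝ => Mᵀ) '' (Set.pi Set.univ
        (fun j : Fin T => {p : Fin n → ℝ | SubG (gam * ω j) (fun i => Uhat i j) p}))) :=
      (isCompact_univ_pi fun j => isCompact_subG _ _).image (continuous_id.matrix_transpose)
    have hKeq : K = (Set.pi Set.univ
        (fun l : Fin m => {p : Fin T → ℝ | SubG (lam * w l) ((D * Uhat) l) p})) ×ˢ
        ((fun M : Matrix (Fin T) (Fin n) ℝ => Mᵀ) '' (Set.pi Set.univ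
        (fun j : Fin T => {p : Fin n → ℝ | SubG (gam * ω j) (fun i => Uhat i j) p}))) := by
      ext p
      constructor
      · rintro ⟨ha, hb⟩
        refine ⟨fun l _ => ha l, ⟨p.2ᵀ, fun j _ => ?_, ?_⟩⟩
        · exact hb j
        · ext i j; simp [Matrix.transpose_apply]
      · rintro ⟨ha, ⟨N, hN, hNe⟩⟩
        refine ⟨fun l => ha l (Set.mem_univ l), fun j => ?_⟩
        have : (fun i => p.2 i j) = N j := by
          funext i; rw [← hNe]; simp [Matrix.transpose_apply]
        rw [this]; exact hN j (Set.mem_univ j)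
    rw [hKeq]; exact h1.prod h2
  -- K nonempty
  have hKne : K.Nonempty := by
    choose P01 hP01 using fun l => exists_subg (lam * w l) (mul_nonneg hlam (hw l)) ((D * Uhat) l)
    choose P02 hP02 using fun j => exists_subg (gam * ω j) (mul_nonneg hgam (hω j))
      (fun i => Uhat i j)
    exact ⟨(Matrix.of fun l jj => P01 l jj, Matrix.of fun i jj => P02 jj i),
      fun l => hP01 l, fun j => hP02 j⟩
  -- minimize
  have hg : Continuous (fun p : Matrix (Fin m) (Fin T) ℝ × Matrix (Fin n) (Fin T) ℝ =>
      frobSq (E + Dᵀ * p.1 + p.2)) := by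
    apply continuous_frobSq.comp
    exact (continuous_const.add (continuous_const.matrix_mul continuous_fst)).add continuous_snd
  obtain ⟨pb, hpbK, hmin⟩ := hKcpt.exists_isMinOn hKne hg.continuousOn
  obtain ⟨hrow, hcol⟩ := hpbK
  set pbar : Matrix (Fin n) (Fin T) ℝ := E + Dᵀ * pb.1 + pb.2 with hpbar
  by_cases h0 : frobSq pbar = 0
  · exact ⟨pb.1, pb.2, hrow, hcol, (frobSq_eq_zero_iff pbar).1 h0⟩
  have hδ : 0 < frobSq pbar := lt_of_le_of_ne (frobSq_nonneg _) (Ne.symm h0)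
  exfalso
  set H : Matrix (Fin n) (Fin T) ℝ := (-1 : ℝ) • pbar with hH
  choose q₁ R₁ hq₁ hR₁ hb₁ using fun l =>
    exists_dir_subg (lam * w l) (mul_nonneg hlam (hw l)) ((D * Uhat) l) ((D * H) l)
  choose q₂ R₂ hq₂ hR₂ hb₂ using fun j =>
    exists_dir_subg (gam * ω j) (mul_nonneg hgam (hω j)) (fun i => Uhat i j) (fun i => H i j)
  set Q₁ : Matrix (Fin m) (Fin T) ℝ := Matrix.of fun l jj => q₁ l jj with hQ₁
  set Q₂ : Matrix (Fin n) (Fin T) ℝ := Matrix.of fun i jj => q₂ jj i with hQ₂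
  have hQK : (Q₁, Q₂) ∈ K := ⟨fun l => hq₁ l, fun j => hq₂ j⟩
  set q : Matrix (Fin n) (Fin T) ℝ := E + Dᵀ * Q₁ + Q₂ with hqdef
  -- variational inequality
  have hvar : frobSq pbar ≤ ipm pbar q := by
    have key : ∀ t : ℝ, 0 < t → t ≤ 1 →
        0 ≤ 2 * t * ipm pbar (q - pbar) + t ^ 2 * frobSq (q - pbar) := by
      intro t ht ht1
      have hmem : ((1 - t) • pb.1 + t • Q₁, (1 - t) • pb.2 + t • Q₂) ∈ K := by
        constructor
        · intro l
          show SubG (lam * w l) ((D * Uhat) l) (((1 - t) • pb.1 + t • Q₁) l)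
          have hfun : ((1 - t) • pb.1 + t • Q₁) l
              = fun jj => (1 - t) * pb.1 l jj + t * Q₁ l jj := by
            funext jj; simp [Matrix.add_apply, Matrix.smul_apply]
          rw [hfun]
          exact SubG.combo (hrow l) (hq₁ l) (by linarith) ht.le (by ring)
        · intro j
          show SubG (gam * ω j) (fun i => Uhat i j) (fun i => ((1 - t) • pb.2 + t • Q₂) i j)
          have hfun : (fun i => ((1 - t) • pb.2 + t • Q₂) i j)
              = fun i => (1 - t) * pb.2 i j + t * Q₂ i j := by
            funext i; simp [Matrix.add_apply, Matrix.smul_apply]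
          rw [hfun]
          exact SubG.combo (hcol j) (hq₂ j) (by linarith) ht.le (by ring)
      have hval := isMinOn_iff.mp hmin _ hmem
      have heq : E + Dᵀ * ((1 - t) • pb.1 + t • Q₁) + ((1 - t) • pb.2 + t • Q₂)
          = pbar + t • (q - pbar) := by
        rw [hpbar, hqdef]
        simp only [Matrix.mul_add, Matrix.mul_smul]
        module
      rw [heq] at hval
      have hexp : frobSq (pbar + t • (q - pbar))
          = frobSq pbar + 2 * t * ipm pbar (q - pbar) + t ^ 2 * frobSq (q - pbar) := by
        rw [frobSq_add, ipm_smul_right, frobSq_smul]; ring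
      rw [hexp] at hval
      linarith
    have hnn : 0 ≤ ipm pbar (q - pbar) := by
      by_contra hneg
      push_neg at hneg
      have hF0 : 0 ≤ frobSq (q - pbar) := frobSq_nonneg _
      rcases eq_or_lt_of_le hF0 with hF1 | hF1
      · have := key 1 one_pos le_rfl; rw [← hF1] at this; linarith
      · set t := min 1 (-(ipm pbar (q - pbar)) / frobSq (q - pbar)) with htd
        have ht : 0 < t := lt_min one_pos (div_pos (neg_pos.2 hneg) hF1)
        have h2 := key t ht (min_le_left _ _)
        have htF : t * frobSq (q - pbar) ≤ -(ipm pbar (q - pbar)) := by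
          calc t * frobSq (q - pbar)
              ≤ (-(ipm pbar (q - pbar)) / frobSq (q - pbar)) * frobSq (q - pbar) :=
                mul_le_mul_of_nonneg_right (min_le_right _ _) hF0
            _ = -(ipm pbar (q - pbar)) := div_mul_cancel₀ _ (ne_of_gt hF1)
        nlinarith
    have heq2 : ipm pbar (q - pbar) = ipm pbar q - frobSq pbar := by
      rw [ipm_sub_right, frobSq_eq_ipm]
    linarith
  -- objective upper bound along direction H
  set Cb : ℝ := (1/2) * frobSq H + (∑ l, R₁ l) + (∑ j, R₂ j) with hCbd
  have hCb : 0 ≤ Cb := by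
    have := frobSq_nonneg H
    have h1 : 0 ≤ ∑ l, R₁ l := Finset.sum_nonneg fun l _ => hR₁ l
    have h2 : 0 ≤ ∑ j, R₂ j := Finset.sum_nonneg fun j _ => hR₂ j
    rw [hCbd]; linarith
  have hS : ipm q H = ipm E H + (∑ l, ipv (q₁ l) ((D * H) l))
      + ∑ j, ipv (q₂ j) (fun i => H i j) := by
    rw [hqdef, ipm_add_left, ipm_add_left]
    congr 1
    · congr 1
      rw [ipm_mulT Dᵀ Q₁ H, Matrix.transpose_transpose]
      rfl
    · show ipm Q₂ H = _
      rw [ipm_def]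
      rw [Finset.sum_comm]
      rfl
  have hobj : ∀ t : ℝ, 0 < t →
      sccObj X D lam gam w ω (Uhat + t • H)
        ≤ sccObj X D lam gam w ω Uhat + t * ipm q H + t ^ 2 * Cb := by
    intro t ht
    have hterm1 : (1/2) * frobSq (Uhat + t • H - X)
        = (1/2) * frobSq E + t * ipm E H + t^2 * ((1/2) * frobSq H) := by
      have h1 : Uhat + t • H - X = E + t • H := by rw [hE]; module
      rw [h1, frobSq_add, ipm_smul_right, frobSq_smul]; ring
    have hterm2 : lam * ∑ l, w l * vecNorm ((D * (Uhat + t • H)) l)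
        ≤ lam * ∑ l, w l * vecNorm ((D * Uhat) l)
          + t * ∑ l, ipv (q₁ l) ((D * H) l) + t^2 * ∑ l, R₁ l := by
      have hrowf : ∀ l, (D * (Uhat + t • H)) l
          = fun jj => (D * Uhat) l jj + t * (D * H) l jj := by
        intro l
        funext jj
        rw [Matrix.mul_add, Matrix.mul_smul]
        simp [Matrix.add_apply, Matrix.smul_apply]
      have hperl : ∀ l, (lam * w l) * vecNorm ((D * (Uhat + t • H)) l)
          ≤ (lam * w l) * vecNorm ((D * Uhat) l)
            + t * ipv (q₁ l) ((D * H) l) + t^2 * R₁ l := by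
        intro l
        rw [hrowf l]
        exact hb₁ l t ht
      calc lam * ∑ l, w l * vecNorm ((D * (Uhat + t • H)) l)
          = ∑ l, (lam * w l) * vecNorm ((D * (Uhat + t • H)) l) := by
            rw [Finset.mul_sum]; exact Finset.sum_congr rfl fun l _ => by ring
        _ ≤ ∑ l, ((lam * w l) * vecNorm ((D * Uhat) l)
              + t * ipv (q₁ l) ((D * H) l) + t^2 * R₁ l) :=
            Finset.sum_le_sum fun l _ => hperl l
        _ = lam * ∑ l, w l * vecNorm ((D * Uhat) l)
              + t * ∑ l, ipv (q₁ l) ((D * H) l) + t^2 * ∑ l, R₁ l := by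
            rw [Finset.sum_add_distrib, Finset.sum_add_distrib, Finset.mul_sum,
              Finset.mul_sum, Finset.mul_sum]
            congr 1
            · congr 1
              exact Finset.sum_congr rfl fun l _ => by ring
        _ = _ := by ring
    have hterm3 : gam * ∑ j, ω j * colNorm (Uhat + t • H) j
        ≤ gam * ∑ j, ω j * colNorm Uhat j
          + t * ∑ j, ipv (q₂ j) (fun i => H i j) + t^2 * ∑ j, R₂ j := by
      have hcolf : ∀ j, (fun i => (Uhat + t • H) i j)
          = fun i => Uhat i j + t * H i j := by
        intro j; funext i; simp [Matrix.add_apply, Matrix.smul_apply]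
      have hperj : ∀ j, (gam * ω j) * colNorm (Uhat + t • H) j
          ≤ (gam * ω j) * colNorm Uhat j
            + t * ipv (q₂ j) (fun i => H i j) + t^2 * R₂ j := by
        intro j
        rw [colNorm_eq, colNorm_eq, hcolf j]
        exact hb₂ j t ht
      calc gam * ∑ j, ω j * colNorm (Uhat + t • H) j
          = ∑ j, (gam * ω j) * colNorm (Uhat + t • H) j := by
            rw [Finset.mul_sum]; exact Finset.sum_congr rfl fun j _ => by ring
        _ ≤ ∑ j, ((gam * ω j) * colNorm Uhat j
              + t * ipv (q₂ j) (fun i => H i j) + t^2 * R₂ j) :=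
            Finset.sum_le_sum fun j _ => hperj j
        _ = gam * ∑ j, ω j * colNorm Uhat j
              + t * ∑ j, ipv (q₂ j) (fun i => H i j) + t^2 * ∑ j, R₂ j := by
            rw [Finset.sum_add_distrib, Finset.sum_add_distrib, Finset.mul_sum,
              Finset.mul_sum, Finset.mul_sum]
            congr 1
            · congr 1
              exact Finset.sum_congr rfl fun j _ => by ring
        _ = _ := by ring
    have hE2 : (1/2 : ℝ) * frobSq (Uhat - X) = (1/2) * frobSq E := by rw [hE]
    unfold sccObj
    rw [hS, hCbd]
    calc (1 / 2) * frobSq (Uhat + t • H - X)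
          + lam * ∑ l, w l * vecNorm ((D * (Uhat + t • H)) l)
          + gam * ∑ j, ω j * colNorm (Uhat + t • H) j
        ≤ ((1/2) * frobSq E + t * ipm E H + t^2 * ((1/2) * frobSq H))
          + (lam * ∑ l, w l * vecNorm ((D * Uhat) l)
            + t * ∑ l, ipv (q₁ l) ((D * H) l) + t^2 * ∑ l, R₁ l)
          + (gam * ∑ j, ω j * colNorm Uhat j
            + t * ∑ j, ipv (q₂ j) (fun i => H i j) + t^2 * ∑ j, R₂ j) := by
          rw [hterm1]
          exact add_le_add (add_le_add le_rfl hterm2) hterm3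
      _ = _ := by rw [hE]; ring
  -- final contradiction
  have hf : ∀ t : ℝ, 0 < t → 0 ≤ t * ipm q H + t ^ 2 * Cb := by
    intro t ht
    have h1 := hUhat (Uhat + t • H)
    have h2 := hobj t ht
    linarith
  have hqH : ipm q H ≤ -frobSq pbar := by
    have h1 : ipm q H = -(ipm pbar q) := by
      rw [hH, ipm_smul_right, ipm_comm]; ring
    linarith
  rcases eq_or_lt_of_le hCb with hCb1 | hCb1
  · have := hf 1 one_pos
    rw [← hCb1] at this
    linarith
  · set t := min 1 (frobSq pbar / (2 * Cb)) with htd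
    have ht : 0 < t := lt_min one_pos (div_pos hδ (by linarith))
    have h2 := hf t ht
    have htCb : t * Cb ≤ frobSq pbar / 2 := by
      calc t * Cb ≤ (frobSq pbar / (2 * Cb)) * Cb :=
          mul_le_mul_of_nonneg_right (min_le_right _ _) hCb
        _ = frobSq pbar / 2 := by field_simp
    clear_value t
    have ha : t * ipm q H ≤ t * (-frobSq pbar) := mul_le_mul_of_nonneg_left hqH ht.le
    have hb2 : t * (t * Cb) ≤ t * (frobSq pbar / 2) := mul_le_mul_of_nonneg_left htCb ht.le
    have hc : t ^ 2 * Cb = t * (t * Cb) := by ring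
    have e1 : t * -frobSq pbar = -(t * frobSq pbar) := by ring
    have e2 : t * (frobSq pbar / 2) = t * frobSq pbar / 2 := by ring
    have hx1 : t * ipm q H ≤ -(t * frobSq pbar) := by rw [← e1]; exact ha
    have hx2 : t ^ 2 * Cb ≤ t * frobSq pbar / 2 := by rw [hc, ← e2]; exact hb2
    have hx3 : 0 < t * frobSq pbar := mul_pos ht hδ
    have h5 : (0:ℝ) ≤ -(t * frobSq pbar) + t * frobSq pbar / 2 :=
      le_trans h2 (add_le_add hx1 hx2)
    linarith only [h5, hx3]
end KKT
section Stationarity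

lemma admm_stationarity {m n T : ℕ} (D : Matrix (Fin m) (Fin n) ℝ) (ρ : ℝ) (hρ : 0 < ρ)
    (R Uk1 : Matrix (Fin n) (Fin T) ℝ)
    (h : Uk1 = ((1 + ρ) • (1 : Matrix (Fin n) (Fin n) ℝ) + ρ • (Dᵀ * D))⁻¹ * R) :
    (1 + ρ) • Uk1 + ρ • (Dᵀ * (D * Uk1)) = R := by
  set M : Matrix (Fin n) (Fin n) ℝ := (1 + ρ) • (1 : Matrix (Fin n) (Fin n) ℝ) + ρ • (Dᵀ * D)
    with hM
  have hpd : M.PosDef := by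
    rw [Matrix.posDef_iff_dotProduct_mulVec]
    constructor
    · show Mᴴ = M
      ext i j
      simp only [hM, Matrix.conjTranspose_apply, Matrix.add_apply, Matrix.smul_apply,
        Matrix.one_apply, Matrix.mul_apply, Matrix.transpose_apply, star_trivial,
        smul_eq_mul]
      by_cases hij : i = j
      · subst hij; ring_nf
      · rw [if_neg hij, if_neg (Ne.symm hij)]
        have : ∑ k, Dᵀ j k * D k i = ∑ k, Dᵀ i k * D k j := by
          simp only [Matrix.transpose_apply]
          exact Finset.sum_congr rfl fun k _ => by ring
        simp only [Matrix.transpose_apply] at this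
        rw [this]
    · intro x hx
      have hxx : 0 < x ⬝ᵥ x := by
        have h1 : x ⬝ᵥ x = ∑ i, (x i)^2 := by
          simp [dotProduct, sq]
        rw [h1]
        have h2 : ∃ i, x i ≠ 0 := by
          by_contra hc; push_neg at hc; exact hx (funext hc)
        obtain ⟨i, hi⟩ := h2
        calc (0:ℝ) < (x i)^2 := by positivity
          _ ≤ ∑ i, (x i)^2 := Finset.single_le_sum (fun i _ => sq_nonneg (x i))
            (Finset.mem_univ i)
      have hDx : 0 ≤ (D *ᵥ x) ⬝ᵥ (D *ᵥ x) := by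
        have h1 : (D *ᵥ x) ⬝ᵥ (D *ᵥ x) = ∑ i, ((D *ᵥ x) i)^2 := by
          simp [dotProduct, sq]
        rw [h1]
        exact Finset.sum_nonneg fun i _ => sq_nonneg _
      have hMx : M *ᵥ x = (1 + ρ) • x + ρ • (Dᵀ *ᵥ (D *ᵥ x)) := by
        rw [hM, Matrix.add_mulVec, Matrix.smul_mulVec, Matrix.smul_mulVec,
          Matrix.one_mulVec, ← Matrix.mulVec_mulVec]
      have hquad : star x ⬝ᵥ (M *ᵥ x) = (1 + ρ) * (x ⬝ᵥ x) + ρ * ((D *ᵥ x) ⬝ᵥ (D *ᵥ x)) := by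
        rw [star_trivial, hMx, dotProduct_add, dotProduct_smul,
          dotProduct_smul]
        have : x ⬝ᵥ (Dᵀ *ᵥ (D *ᵥ x)) = (D *ᵥ x) ⬝ᵥ (D *ᵥ x) := by
          rw [Matrix.dotProduct_mulVec, Matrix.vecMul_transpose]
        rw [this]; simp [smul_eq_mul]
      rw [hquad]
      nlinarith
  have hdet : IsUnit M.det := by
    rw [isUnit_iff_ne_zero]
    exact ne_of_gt hpd.det_pos
  have hMU : M * Uk1 = R := by
    rw [h, ← Matrix.mul_assoc, Matrix.mul_nonsing_inv M hdet, Matrix.one_mul]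
  calc (1 + ρ) • Uk1 + ρ • (Dᵀ * (D * Uk1)) = M * Uk1 := by
        rw [hM, Matrix.add_mul, Matrix.smul_mul, Matrix.smul_mul, Matrix.one_mul,
          Matrix.mul_assoc]
    _ = R := hMU

end Stationarity
section Lyap

lemma ipm_zero_left {α β : Type*} [Fintype α] [Fintype β] (B : Matrix α β ℝ) :
    ipm 0 B = 0 := by simp [ipm_def]

lemma lyap_step {m n T : ℕ} (D : Matrix (Fin m) (Fin n) ℝ) (ρ : ℝ) (hρ : 0 < ρ)
    (X Uhat Uk1 V2k V2k1 Z2k Z2k1 Zs₂ : Matrix (Fin n) (Fin T) ℝ)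
    (V1k V1k1 Z1k Z1k1 Zs₁ : Matrix (Fin m) (Fin T) ℝ)
    (hstat : (1 + ρ) • Uk1 + ρ • (Dᵀ * (D * Uk1))
        = X + ρ • (Dᵀ * (V1k - Z1k)) + ρ • (V2k - Z2k))
    (hkkt : Uhat - X + ρ • (Dᵀ * Zs₁) + ρ • Zs₂ = 0)
    (hZ1 : Z1k1 = Z1k + D * Uk1 - V1k1)
    (hZ2 : Z2k1 = Z2k + Uk1 - V2k1)
    (hmono : 0 ≤ ipm (Z1k1 - Zs₁) (V1k1 - D * Uhat) + ipm (Z2k1 - Zs₂) (V2k1 - Uhat)) :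
    frobSq (Z1k1 - Zs₁) + frobSq (Z2k1 - Zs₂)
      + frobSq (V1k1 - D * Uhat) + frobSq (V2k1 - Uhat)
      + frobSq (D * Uk1 - V1k) + frobSq (Uk1 - V2k)
      + (2 / ρ) * frobSq (Uk1 - Uhat)
    ≤ frobSq (Z1k - Zs₁) + frobSq (Z2k - Zs₂)
      + frobSq (V1k - D * Uhat) + frobSq (V2k - Uhat) := by
  -- expansions of the old-iterate quantities
  have h1 : frobSq (Z1k - Zs₁) = frobSq (Z1k1 - Zs₁)
      - 2 * ipm (Z1k1 - Zs₁) (D * Uk1 - V1k1) + frobSq (D * Uk1 - V1k1) := by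
    have e : Z1k - Zs₁ = (Z1k1 - Zs₁) - (D * Uk1 - V1k1) := by rw [hZ1]; module
    rw [e, frobSq_sub]
  have h2 : frobSq (Z2k - Zs₂) = frobSq (Z2k1 - Zs₂)
      - 2 * ipm (Z2k1 - Zs₂) (Uk1 - V2k1) + frobSq (Uk1 - V2k1) := by
    have e : Z2k - Zs₂ = (Z2k1 - Zs₂) - (Uk1 - V2k1) := by rw [hZ2]; module
    rw [e, frobSq_sub]
  have h3 : frobSq (V1k - D * Uhat) = frobSq (V1k1 - D * Uhat)
      + 2 * ipm (V1k1 - D * Uhat) (V1k - V1k1) + frobSq (V1k - V1k1) := by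
    have e : V1k - D * Uhat = (V1k1 - D * Uhat) + (V1k - V1k1) := by module
    rw [e, frobSq_add]
  have h4 : frobSq (V2k - Uhat) = frobSq (V2k1 - Uhat)
      + 2 * ipm (V2k1 - Uhat) (V2k - V2k1) + frobSq (V2k - V2k1) := by
    have e : V2k - Uhat = (V2k1 - Uhat) + (V2k - V2k1) := by module
    rw [e, frobSq_add]
  have h5 : frobSq (D * Uk1 - V1k) = frobSq (D * Uk1 - V1k1)
      - 2 * ipm (D * Uk1 - V1k1) (V1k - V1k1) + frobSq (V1k - V1k1) := by
    have e : D * Uk1 - V1k = (D * Uk1 - V1k1) - (V1k - V1k1) := by module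
    rw [e, frobSq_sub]
  have h6 : frobSq (Uk1 - V2k) = frobSq (Uk1 - V2k1)
      - 2 * ipm (Uk1 - V2k1) (V2k - V2k1) + frobSq (V2k - V2k1) := by
    have e : Uk1 - V2k = (Uk1 - V2k1) - (V2k - V2k1) := by module
    rw [e, frobSq_sub]
  -- stationarity difference
  have hF4 : (Uk1 - Uhat) + ρ • (Dᵀ * ((Z1k1 - Zs₁) - (V1k - V1k1)))
      + ρ • ((Z2k1 - Zs₂) - (V2k - V2k1)) = 0 := by
    rw [hZ1, hZ2]
    have e : (Uk1 - Uhat) + ρ • (Dᵀ * ((Z1k + D * Uk1 - V1k1 - Zs₁) - (V1k - V1k1)))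
        + ρ • ((Z2k + Uk1 - V2k1 - Zs₂) - (V2k - V2k1))
        = ((1 + ρ) • Uk1 + ρ • (Dᵀ * (D * Uk1))
            - (X + ρ • (Dᵀ * (V1k - Z1k)) + ρ • (V2k - Z2k)))
          - (Uhat - X + ρ • (Dᵀ * Zs₁) + ρ • Zs₂) := by
      simp only [Matrix.mul_sub, Matrix.mul_add]
      module
    rw [e, sub_eq_zero_of_eq hstat, hkkt, sub_zero]
  have h7 : frobSq (Uk1 - Uhat)
      + ρ * (ipm (Z1k1 - Zs₁) (D * (Uk1 - Uhat)) - ipm (V1k - V1k1) (D * (Uk1 - Uhat)))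
      + ρ * (ipm (Z2k1 - Zs₂) (Uk1 - Uhat) - ipm (V2k - V2k1) (Uk1 - Uhat)) = 0 := by
    have h := congrArg (fun M => ipm M (Uk1 - Uhat)) hF4
    simp only [ipm_sub_left, ipm_sub_right, ipm_add_left, ipm_add_right, ipm_smul_left,
      ipm_smul_right, ipm_mulT, Matrix.transpose_transpose, Matrix.mul_sub, Matrix.mul_add,
      ipm_zero_left] at h
    rw [frobSq_eq_ipm]
    simp only [ipm_sub_left, ipm_sub_right, ipm_add_left, ipm_add_right, ipm_smul_left,
      ipm_smul_right, ipm_mulT, Matrix.transpose_transpose, Matrix.mul_sub, Matrix.mul_add,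
      ipm_zero_left]
    linarith [h]
  -- decompositions of the residuals
  have h8 : ipm (Z1k1 - Zs₁) (D * Uk1 - V1k1)
      = ipm (Z1k1 - Zs₁) (D * (Uk1 - Uhat)) - ipm (Z1k1 - Zs₁) (V1k1 - D * Uhat) := by
    have e : D * Uk1 - V1k1 = D * (Uk1 - Uhat) - (V1k1 - D * Uhat) := by
      simp only [Matrix.mul_sub]; module
    conv_lhs => rw [e]
    exact ipm_sub_right _ _ _
  have h9 : ipm (Z2k1 - Zs₂) (Uk1 - V2k1)
      = ipm (Z2k1 - Zs₂) (Uk1 - Uhat) - ipm (Z2k1 - Zs₂) (V2k1 - Uhat) := by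
    have e : Uk1 - V2k1 = (Uk1 - Uhat) - (V2k1 - Uhat) := by module
    conv_lhs => rw [e]
    exact ipm_sub_right _ _ _
  have h10 : ipm (V1k1 - D * Uhat) (V1k - V1k1)
      = ipm (D * (Uk1 - Uhat)) (V1k - V1k1) - ipm (D * Uk1 - V1k1) (V1k - V1k1) := by
    have e : V1k1 - D * Uhat = D * (Uk1 - Uhat) - (D * Uk1 - V1k1) := by
      simp only [Matrix.mul_sub]; module
    conv_lhs => rw [e]
    exact ipm_sub_left _ _ _
  have h11 : ipm (V2k1 - Uhat) (V2k - V2k1)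
      = ipm (Uk1 - Uhat) (V2k - V2k1) - ipm (Uk1 - V2k1) (V2k - V2k1) := by
    have e : V2k1 - Uhat = (Uk1 - Uhat) - (Uk1 - V2k1) := by module
    conv_lhs => rw [e]
    exact ipm_sub_left _ _ _
  -- commutations
  have c1 : ipm (V1k - V1k1) (D * (Uk1 - Uhat)) = ipm (D * (Uk1 - Uhat)) (V1k - V1k1) :=
    ipm_comm _ _
  have c2 : ipm (V2k - V2k1) (Uk1 - Uhat) = ipm (Uk1 - Uhat) (V2k - V2k1) :=
    ipm_comm _ _
  -- eliminate the division
  have hC : frobSq (Uk1 - Uhat)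
      = ρ * (ipm (D * (Uk1 - Uhat)) (V1k - V1k1) + ipm (Uk1 - Uhat) (V2k - V2k1)
        - ipm (Z1k1 - Zs₁) (D * (Uk1 - Uhat)) - ipm (Z2k1 - Zs₂) (Uk1 - Uhat)) := by
    rw [← c1, ← c2]; linarith [h7]
  have hdiv : (2 / ρ) * frobSq (Uk1 - Uhat)
      = 2 * (ipm (D * (Uk1 - Uhat)) (V1k - V1k1) + ipm (Uk1 - Uhat) (V2k - V2k1)
        - ipm (Z1k1 - Zs₁) (D * (Uk1 - Uhat)) - ipm (Z2k1 - Zs₂) (Uk1 - Uhat)) := by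
    rw [hC]
    field_simp
  linarith [h1, h2, h3, h4, h5, h6, h8, h9, h10, h11, hmono, hdiv]

end Lyap
section Topo
variable {α β : Type*} [Fintype α] [Fintype β]

lemma frobSq_zero : frobSq (0 : Matrix α β ℝ) = 0 := by simp [frobSq]

lemma tendsto_matrix_of_frobSq {W : ℕ → Matrix α β ℝ}
    (h : Tendsto (fun k => frobSq (W k)) atTop (nhds 0)) :
    Tendsto W atTop (nhds 0) := by
  refine tendsto_pi_nhds.2 ?_
  intro i
  rw [tendsto_pi_nhds]
  intro j
  have hg : Tendsto (fun k => Real.sqrt (frobSq (W k))) atTop (nhds 0) := by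
    have := (Real.continuous_sqrt.tendsto 0).comp h
    simpa [Function.comp_def] using this
  apply squeeze_zero_norm _ hg
  intro k
  show |W k i j| ≤ Real.sqrt (frobSq (W k))
  rw [← Real.sqrt_sq_eq_abs]
  apply Real.sqrt_le_sqrt
  calc (W k i j)^2 ≤ ∑ jj, (W k i jj)^2 :=
        Finset.single_le_sum (f := fun jj => (W k i jj)^2) (fun jj _ => sq_nonneg _) (Finset.mem_univ j)
    _ ≤ ∑ ii, ∑ jj, (W k ii jj)^2 :=
        Finset.single_le_sum (f := fun ii => ∑ jj, (W k ii jj)^2)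
          (fun ii _ => Finset.sum_nonneg fun jj _ => sq_nonneg _) (Finset.mem_univ i)

lemma tendsto_frobNorm_zero {W : ℕ → Matrix α β ℝ}
    (h : Tendsto W atTop (nhds 0)) :
    Tendsto (fun k => frobNorm (W k)) atTop (nhds 0) := by
  have hc : Continuous (fun A : Matrix α β ℝ => frobNorm A) :=
    Real.continuous_sqrt.comp continuous_frobSq
  have := (hc.tendsto 0).comp h
  simpa [frobNorm, frobSq_zero, Function.comp_def] using this

lemma tendsto_frobNorm_sub {W : ℕ → Matrix α β ℝ} {L : Matrix α β ℝ}
    (h : Tendsto W atTop (nhds L)) :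
    Tendsto (fun k => frobNorm (W k - L)) atTop (nhds 0) := by
  apply tendsto_frobNorm_zero
  have := h.sub (tendsto_const_nhds (x := L))
  simpa using this

end Topo

/-- (Theorem 1, convergence part.)  For any initialization, the Cartesian-Block ADMM for
sparse convex clustering produces primal iterates `U^k` converging (in Frobenius norm) to the
unique minimizer `Û` of the sparse convex clustering objective, copy iterates converging to
`DÛ` and `Û`, and primal residuals converging to zero. -/
theorem cartesian_block_admm_convergence
    {m n T : ℕ} (X : Matrix (Fin n) (Fin T) ℝ) (D : Matrix (Fin m) (Fin n) ℝ)
    (ρ lam gam : ℝ) (hρ : 0 < ρ) (hlam : 0 ≤ lam) (hgam : 0 ≤ gam)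
    (w : Fin m → ℝ) (hw : ∀ l, 0 ≤ w l) (ω : Fin T → ℝ) (hω : ∀ j, 0 ≤ ω j)
    (U V₂ Z₂ : ℕ → Matrix (Fin n) (Fin T) ℝ) (V₁ Z₁ : ℕ → Matrix (Fin m) (Fin T) ℝ)
    (hU : ∀ k, U (k + 1) =
      ((1 + ρ) • (1 : Matrix (Fin n) (Fin n) ℝ) + ρ • (Dᵀ * D))⁻¹ *
        (X + ρ • (Dᵀ * (V₁ k - Z₁ k)) + ρ • (V₂ k - Z₂ k)))
    (hV₁ : ∀ k l j, V₁ (k + 1) l j =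
      max (1 - (lam * w l / ρ) / vecNorm ((D * U (k + 1) + Z₁ k) l)) 0
        * (D * U (k + 1) + Z₁ k) l j)
    (hV₂ : ∀ k i j, V₂ (k + 1) i j =
      max (1 - (gam * ω j / ρ) / colNorm (U (k + 1) + Z₂ k) j) 0
        * (U (k + 1) + Z₂ k) i j)
    (hZ₁ : ∀ k, Z₁ (k + 1) = Z₁ k + D * U (k + 1) - V₁ (k + 1))
    (hZ₂ : ∀ k, Z₂ (k + 1) = Z₂ k + U (k + 1) - V₂ (k + 1))
    (Uhat : Matrix (Fin n) (Fin T) ℝ)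
    (hUhat : ∀ W, sccObj X D lam gam w ω Uhat ≤ sccObj X D lam gam w ω W) :
    Tendsto (fun k => frobNorm (U k - Uhat)) atTop (nhds 0)
    ∧ Tendsto (fun k => frobNorm (V₁ k - D * Uhat)) atTop (nhds 0)
    ∧ Tendsto (fun k => frobNorm (V₂ k - Uhat)) atTop (nhds 0)
    ∧ Tendsto (fun k => frobNorm (D * U k - V₁ k)) atTop (nhds 0)
    ∧ Tendsto (fun k => frobNorm (U k - V₂ k)) atTop (nhds 0) := by
  obtain ⟨P₁, P₂, hP₁, hP₂, hPeq⟩ := kkt_exists X D lam gam hlam hgam w hw ω hω Uhat hUhat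
  have hρ' : ρ ≠ 0 := ne_of_gt hρ
  set Zs₁ : Matrix (Fin m) (Fin T) ℝ := ρ⁻¹ • P₁ with hZs₁
  set Zs₂ : Matrix (Fin n) (Fin T) ℝ := ρ⁻¹ • P₂ with hZs₂
  have hPZ₁ : P₁ = ρ • Zs₁ := by rw [hZs₁, smul_smul, mul_inv_cancel₀ hρ', one_smul]
  have hPZ₂ : P₂ = ρ • Zs₂ := by rw [hZs₂, smul_smul, mul_inv_cancel₀ hρ', one_smul]
  have hkkt : Uhat - X + ρ • (Dᵀ * Zs₁) + ρ • Zs₂ = 0 := by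
    rw [hZs₁, hZs₂, Matrix.mul_smul, smul_smul, smul_smul, mul_inv_cancel₀ hρ',
      one_smul, one_smul]
    exact hPeq
  have hstat : ∀ k, (1 + ρ) • U (k+1) + ρ • (Dᵀ * (D * U (k+1)))
      = X + ρ • (Dᵀ * (V₁ k - Z₁ k)) + ρ • (V₂ k - Z₂ k) :=
    fun k => admm_stationarity D ρ hρ _ _ (hU k)
  have hsub₁ : ∀ k l, SubG (lam * w l) (V₁ (k+1) l) (fun j => ρ * Z₁ (k+1) l j) := by
    intro k l
    have hs := softthresh_subG (lam * w l) ρ (mul_nonneg hlam (hw l)) hρ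
      ((D * U (k+1) + Z₁ k) l) (V₁ (k+1) l) (fun j => hV₁ k l j)
    have he : (fun j => ρ * ((D * U (k+1) + Z₁ k) l j - V₁ (k+1) l j))
        = fun j => ρ * Z₁ (k+1) l j := by
      funext j
      rw [hZ₁ k]
      simp only [Matrix.add_apply, Matrix.sub_apply]
      ring
    rwa [he] at hs
  have hsub₂ : ∀ k j, SubG (gam * ω j) (fun i => V₂ (k+1) i j)
      (fun i => ρ * Z₂ (k+1) i j) := by
    intro k j
    have hs := softthresh_subG (gam * ω j) ρ (mul_nonneg hgam (hω j)) hρ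
      (fun i => (U (k+1) + Z₂ k) i j) (fun i => V₂ (k+1) i j)
      (fun i => hV₂ k i j)
    have he : (fun i => ρ * ((U (k+1) + Z₂ k) i j - V₂ (k+1) i j))
        = fun i => ρ * Z₂ (k+1) i j := by
      funext i
      rw [hZ₂ k]
      simp only [Matrix.add_apply, Matrix.sub_apply]
      ring
    rwa [he] at hs
  have hmono : ∀ k, 0 ≤ ipm (Z₁ (k+1) - Zs₁) (V₁ (k+1) - D * Uhat)
      + ipm (Z₂ (k+1) - Zs₂) (V₂ (k+1) - Uhat) := by
    intro k
    have hm₁ : 0 ≤ ipm (ρ • Z₁ (k+1) - P₁) (V₁ (k+1) - D * Uhat) := by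
      have he : ipm (ρ • Z₁ (k+1) - P₁) (V₁ (k+1) - D * Uhat)
          = ∑ l, ipv (fun j => (ρ * Z₁ (k+1) l j) - P₁ l j)
              (fun j => V₁ (k+1) l j - (D * Uhat) l j) := by
        rw [show ipm (ρ • Z₁ (k+1) - P₁) (V₁ (k+1) - D * Uhat)
            = ∑ l, ipv ((ρ • Z₁ (k+1) - P₁) l) ((V₁ (k+1) - D * Uhat) l) from rfl]
        apply Finset.sum_congr rfl
        intro l _
        have e1 : (ρ • Z₁ (k+1) - P₁) l = fun j => (ρ * Z₁ (k+1) l j) - P₁ l j := by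
          funext j; simp [Matrix.sub_apply, Matrix.smul_apply]
        have e2 : (V₁ (k+1) - D * Uhat) l = fun j => V₁ (k+1) l j - (D * Uhat) l j := by
          funext j; simp [Matrix.sub_apply]
        rw [e1, e2]
      rw [he]
      exact Finset.sum_nonneg fun l _ => SubG.mono (hsub₁ k l) (hP₁ l)
    have hm₂ : 0 ≤ ipm (ρ • Z₂ (k+1) - P₂) (V₂ (k+1) - Uhat) := by
      have he : ipm (ρ • Z₂ (k+1) - P₂) (V₂ (k+1) - Uhat)
          = ∑ j, ipv (fun i => (ρ * Z₂ (k+1) i j) - P₂ i j)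
              (fun i => V₂ (k+1) i j - Uhat i j) := by
        rw [ipm_def]
        rw [Finset.sum_comm]
        apply Finset.sum_congr rfl
        intro j _
        apply Finset.sum_congr rfl
        intro i _
        simp [Matrix.sub_apply, Matrix.smul_apply, ipv]
      rw [he]
      exact Finset.sum_nonneg fun j _ => SubG.mono (hsub₂ k j) (hP₂ j)
    have e₁ : ipm (ρ • Z₁ (k+1) - P₁) (V₁ (k+1) - D * Uhat)
        = ρ * ipm (Z₁ (k+1) - Zs₁) (V₁ (k+1) - D * Uhat) := by
      rw [hPZ₁, ← smul_sub, ipm_smul_left]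
    have e₂ : ipm (ρ • Z₂ (k+1) - P₂) (V₂ (k+1) - Uhat)
        = ρ * ipm (Z₂ (k+1) - Zs₂) (V₂ (k+1) - Uhat) := by
      rw [hPZ₂, ← smul_sub, ipm_smul_left]
    rw [e₁] at hm₁
    rw [e₂] at hm₂
    have h₁ : 0 ≤ ipm (Z₁ (k+1) - Zs₁) (V₁ (k+1) - D * Uhat) := by
      have h' : ρ * 0 ≤ ρ * ipm (Z₁ (k+1) - Zs₁) (V₁ (k+1) - D * Uhat) := by
        rw [mul_zero]; exact hm₁
      exact le_of_mul_le_mul_left h' hρ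
    have h₂ : 0 ≤ ipm (Z₂ (k+1) - Zs₂) (V₂ (k+1) - Uhat) := by
      have h' : ρ * 0 ≤ ρ * ipm (Z₂ (k+1) - Zs₂) (V₂ (k+1) - Uhat) := by
        rw [mul_zero]; exact hm₂
      exact le_of_mul_le_mul_left h' hρ
    linarith
  set Φ : ℕ → ℝ := fun k => frobSq (Z₁ k - Zs₁) + frobSq (Z₂ k - Zs₂)
    + frobSq (V₁ k - D * Uhat) + frobSq (V₂ k - Uhat) with hΦ
  have hstep : ∀ k, Φ (k+1) + frobSq (D * U (k+1) - V₁ k) + frobSq (U (k+1) - V₂ k)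
      + (2/ρ) * frobSq (U (k+1) - Uhat) ≤ Φ k := by
    intro k
    have h := lyap_step D ρ hρ X Uhat (U (k+1)) (V₂ k) (V₂ (k+1)) (Z₂ k) (Z₂ (k+1)) Zs₂
      (V₁ k) (V₁ (k+1)) (Z₁ k) (Z₁ (k+1)) Zs₁ (hstat k) hkkt (hZ₁ k) (hZ₂ k) (hmono k)
    rw [hΦ]
    dsimp only
    linarith
  clear_value Φ
  have h2ρ : 0 < 2/ρ := by positivity
  have hΦ0 : ∀ k, 0 ≤ Φ k := by
    intro k
    rw [hΦ]
    dsimp only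
    have := frobSq_nonneg (Z₁ k - Zs₁)
    have := frobSq_nonneg (Z₂ k - Zs₂)
    have := frobSq_nonneg (V₁ k - D * Uhat)
    have := frobSq_nonneg (V₂ k - Uhat)
    linarith
  have hmonoΦ : ∀ k, Φ (k+1) ≤ Φ k := by
    intro k
    have h := hstep k
    have h1 := frobSq_nonneg (D * U (k+1) - V₁ k)
    have h2 := frobSq_nonneg (U (k+1) - V₂ k)
    have h3 := frobSq_nonneg (U (k+1) - Uhat)
    have h4 : 0 ≤ (2/ρ) * frobSq (U (k+1) - Uhat) := mul_nonneg (le_of_lt h2ρ) h3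
    linarith
  have hΦlim : Tendsto Φ atTop (nhds (⨅ k, Φ k)) := by
    apply tendsto_atTop_ciInf (antitone_nat_of_succ_le hmonoΦ)
    exact ⟨0, by rintro x ⟨k, rfl⟩; exact hΦ0 k⟩
  have hdiff : Tendsto (fun k => Φ k - Φ (k+1)) atTop (nhds 0) := by
    have h2 : Tendsto (fun k => Φ (k+1)) atTop (nhds (⨅ k, Φ k)) :=
      (tendsto_add_atTop_iff_nat 1).2 hΦlim
    have := hΦlim.sub h2
    simpa using this
  have hq1 : Tendsto (fun k => frobSq (D * U (k+1) - V₁ k)) atTop (nhds 0) := by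
    apply squeeze_zero (fun k => frobSq_nonneg _) _ hdiff
    intro k
    have h := hstep k
    have h2 := frobSq_nonneg (U (k+1) - V₂ k)
    have h3 := frobSq_nonneg (U (k+1) - Uhat)
    have h4 : 0 ≤ (2/ρ) * frobSq (U (k+1) - Uhat) := mul_nonneg (le_of_lt h2ρ) h3
    linarith
  have hq2 : Tendsto (fun k => frobSq (U (k+1) - V₂ k)) atTop (nhds 0) := by
    apply squeeze_zero (fun k => frobSq_nonneg _) _ hdiff
    intro k
    have h := hstep k
    have h1 := frobSq_nonneg (D * U (k+1) - V₁ k)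
    have h3 := frobSq_nonneg (U (k+1) - Uhat)
    have h4 : 0 ≤ (2/ρ) * frobSq (U (k+1) - Uhat) := mul_nonneg (le_of_lt h2ρ) h3
    linarith
  have hq3 : Tendsto (fun k => frobSq (U (k+1) - Uhat)) atTop (nhds 0) := by
    have hq3' : Tendsto (fun k => (2/ρ) * frobSq (U (k+1) - Uhat)) atTop (nhds 0) := by
      apply squeeze_zero
        (fun k => mul_nonneg (le_of_lt h2ρ) (frobSq_nonneg _)) _ hdiff
      intro k
      have h := hstep k
      have h1 := frobSq_nonneg (D * U (k+1) - V₁ k)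
      have h2 := frobSq_nonneg (U (k+1) - V₂ k)
      linarith
    have := hq3'.const_mul (ρ/2)
    simp only [mul_zero] at this
    have he : (fun k => (ρ/2) * ((2/ρ) * frobSq (U (k+1) - Uhat)))
        = fun k => frobSq (U (k+1) - Uhat) := by
      funext k
      field_simp
    rwa [he] at this
  -- limits of the matrices
  have hU2 : Tendsto (fun k => U (k+1)) atTop (nhds Uhat) := by
    have h := tendsto_matrix_of_frobSq hq3
    have := h.add (tendsto_const_nhds (x := Uhat))
    simp only [zero_add] at this
    have he : (fun k => U (k+1) - Uhat + Uhat) = fun k => U (k+1) := by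
      funext k; abel
    rwa [he] at this
  have hUlim : Tendsto U atTop (nhds Uhat) := (tendsto_add_atTop_iff_nat 1).1 hU2
  have hDcont : Continuous (fun M : Matrix (Fin n) (Fin T) ℝ => D * M) :=
    continuous_const.matrix_mul continuous_id
  have hDU2 : Tendsto (fun k => D * U (k+1)) atTop (nhds (D * Uhat)) :=
    (hDcont.tendsto Uhat).comp hU2
  have hV₁lim : Tendsto V₁ atTop (nhds (D * Uhat)) := by
    have hA := tendsto_matrix_of_frobSq hq1
    have := hDU2.sub hA
    simp only [sub_zero] at this
    have he : (fun k => D * U (k+1) - (D * U (k+1) - V₁ k)) = fun k => V₁ k := by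
      funext k; abel
    rwa [he] at this
  have hV₂lim : Tendsto V₂ atTop (nhds Uhat) := by
    have hB := tendsto_matrix_of_frobSq hq2
    have := hU2.sub hB
    simp only [sub_zero] at this
    have he : (fun k => U (k+1) - (U (k+1) - V₂ k)) = fun k => V₂ k := by
      funext k; abel
    rwa [he] at this
  refine ⟨tendsto_frobNorm_sub hUlim, tendsto_frobNorm_sub hV₁lim,
    tendsto_frobNorm_sub hV₂lim, ?_, ?_⟩
  · have hDU : Tendsto (fun k => D * U k) atTop (nhds (D * Uhat)) :=
      (hDcont.tendsto Uhat).comp hUlim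
    apply tendsto_frobNorm_zero
    have := hDU.sub hV₁lim
    simpa using this
  · apply tendsto_frobNorm_zero
    have := hUlim.sub hV₂lim
    simpa using this
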